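/- Let K be a complete discrete valuation field of mixed characteristic (0, p) containing a primitive p-th root of unity ζ_p, with residue field F and prime element π. Let L = K(α) be a Kummer extension with α^p = a ∈ K^×. Suppose a ∈ (1 + π^{mp}·u)·(1 + π^{n+1}·O_K) for some integer m with 1 ≤ n = mp < e_K·p/(p − 1), and some u ∈ O_K whose residue class ū does not belong to F^p. Then the residue field E of L equals F(ū^{1/p}) and e(L/K) = 1. -/

import Mathlib

/-! Put `t = (α - 1) / π ^ m`. Expanding `(1 + π ^ m t) ^ p = a` and dividing by `π ^ (m p)` shows
that `t` is a root of a monic polynomial of degree `p` whose middle coefficients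
`C(p, i) π ^ (m (i - p))` lie in the maximal ideal (this is where `m p (p - 1) < e_K p` enters) and
whose constant term is congruent to `-u`. Hence `t` is integral and its residue `β` satisfies
`β ^ p = ū`. Since `ū` is not a `p`-th power, `1, β, …, β ^ (p - 1)` are linearly independent over
`F`, so `v_L (∑ c_i t ^ i) = (max v_K (c_i)) ^ e`. As `[L : K] ≤ p`, the powers of `t` form a
`K`-basis of `L`; consequently every value of `v_L` is an `e`-th power of a value of `v_K`, which
forces `e = 1`, and every residue class of `L` is a polynomial in `β` over `F`. -/

noncomputable section

open IsLocalRing Multiplicative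

local notation "ℤₘ₀" => WithZero (Multiplicative ℤ)

variable {K L : Type*} [Field K] [Field L] [Algebra K L]

/-- The ring homomorphism between valuation rings induced by an extension of valued fields
whose ramification index is `e`. -/
def VIntHom (vK : Valuation K ℤₘ₀) (vL : Valuation L ℤₘ₀) (e : ℕ)
    (h : ∀ x : K, vL (algebraMap K L x) = vK x ^ e) :
    vK.valuationSubring →+* vL.valuationSubring :=
  RingHom.codRestrict ((algebraMap K L).comp vK.valuationSubring.subtype)
    vL.valuationSubring.toSubring
    (fun x => by
      have hx : vK (x : K) ≤ 1 := x.2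
      show vL (algebraMap K L (x : K)) ≤ 1
      rw [h]
      exact pow_le_one' hx e)

theorem VIntHom_isLocalHom (vK : Valuation K ℤₘ₀) (vL : Valuation L ℤₘ₀) (e : ℕ) (he : 0 < e)
    (h : ∀ x : K, vL (algebraMap K L x) = vK x ^ e) :
    IsLocalHom (VIntHom vK vL e h) := by
  constructor
  intro a ha
  obtain ⟨u, hu⟩ := ha
  have hx : vL ((u : vL.valuationSubring) : L) ≤ 1 := (u : vL.valuationSubring).2
  have hx' : vL (((u⁻¹ : _) : vL.valuationSubring) : L) ≤ 1 := ((u⁻¹ : _) : vL.valuationSubring).2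
  have hmul : ((u : vL.valuationSubring) : L) * (((u⁻¹ : _) : vL.valuationSubring) : L) = 1 := by
    rw [← Subring.coe_mul]
    norm_cast
    simp
  have h1 : vL ((u : vL.valuationSubring) : L) = 1 := by
    refine le_antisymm hx ?_
    have hh := map_mul vL ((u : vL.valuationSubring) : L) (((u⁻¹ : _) : vL.valuationSubring) : L)
    rw [hmul, map_one] at hh
    calc (1 : ℤₘ₀) = vL ((u : vL.valuationSubring) : L) * vL (((u⁻¹ : _) : vL.valuationSubring) : L) := hh
      _ ≤ vL ((u : vL.valuationSubring) : L) * 1 := mul_le_mul' le_rfl hx'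
      _ = vL ((u : vL.valuationSubring) : L) := mul_one _
  have h2 : vL (algebraMap K L (a : K)) = 1 := by
    rw [hu] at h1
    exact h1
  have hKa : vK (a : K) = 1 := by
    rw [h] at h2
    by_contra hne
    have hlt : vK (a : K) < 1 := lt_of_le_of_ne a.2 hne
    have : vK (a : K) ^ e < 1 := pow_lt_one' hlt he.ne'
    rw [h2] at this
    exact lt_irrefl _ this
  have hne : (a : K) ≠ 0 := by
    intro h0
    rw [h0, map_zero] at hKa
    exact zero_ne_one hKa
  refine IsUnit.of_mul_eq_one (a := a) ⟨(a : K)⁻¹, ?_⟩ (Subtype.ext ?_)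
  · show vK (a : K)⁻¹ ≤ 1
    rw [map_inv₀, hKa, inv_one]
  · show ((a : K) * (a : K)⁻¹ : K) = 1
    exact mul_inv_cancel₀ hne

/-- The induced homomorphism between residue fields of an extension of valued fields. -/
def ResHom (vK : Valuation K ℤₘ₀) (vL : Valuation L ℤₘ₀) (e : ℕ) (he : 0 < e)
    (h : ∀ x : K, vL (algebraMap K L x) = vK x ^ e) :
    ResidueField vK.valuationSubring →+* ResidueField vL.valuationSubring :=
  haveI : IsLocalHom (VIntHom vK vL e h) := VIntHom_isLocalHom vK vL e he h
  IsLocalRing.ResidueField.map (VIntHom vK vL e h)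

namespace Valuation

variable {R F Γ₀ : Type*} [CommRing R] [Field F] [LinearOrderedCommGroupWithZero Γ₀]

theorem map_natCast_le_one (v : Valuation R Γ₀) (n : ℕ) : v n ≤ 1 := by
  induction n with
  | zero => simp
  | succ k ih => rw [Nat.cast_succ]; exact v.map_add_le ih v.map_one.le

theorem le_one_and_pow_sub_lt_one_of_pow_add_sum_eq (v : Valuation R Γ₀) {n : ℕ} (hn : n ≠ 0)
    {s : Finset ℕ} (hs : ∀ i ∈ s, i < n) {c : ℕ → R} (hc : ∀ i ∈ s, v (c i) < 1) {t b : R}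
    (hb : v b ≤ 1) (h : t ^ n + ∑ i ∈ s, c i * t ^ i = b) : v t ≤ 1 ∧ v (t ^ n - b) < 1 := by
  by_cases ht : v t ≤ 1
  · refine ⟨ht, ?_⟩
    rw [← h, sub_add_cancel_left, map_neg]
    refine v.map_sum_lt one_ne_zero fun i hi => ?_
    rw [map_mul, map_pow]
    exact mul_lt_one_of_lt_of_le (hc i hi) (pow_le_one' ht i)
  · push Not at ht
    have hsum : v (∑ i ∈ s, c i * t ^ i) < v (t ^ n) := by
      refine v.map_sum_lt (by rw [map_pow]; exact pow_ne_zero _ (zero_lt_one.trans ht).ne')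
        fun i hi => ?_
      rw [map_mul, map_pow, map_pow]
      calc v (c i) * v t ^ i < 1 * v t ^ i :=
            mul_lt_mul_of_pos_right (hc i hi) (pow_pos (zero_lt_one.trans ht) i)
        _ ≤ v t ^ n := by rw [one_mul]; exact pow_le_pow_right₀ ht.le (hs i hi).le
    have := v.map_add_eq_of_lt_left hsum
    rw [h, map_pow] at this
    exact absurd (this ▸ hb) (not_le.2 (one_lt_pow₀ ht hn))

theorem choose_mul_pow_div_pow_lt_one (v : Valuation F Γ₀) {p : ℕ} (hp : p.Prime) {ϖ : F}
    (hϖ0 : ϖ ≠ 0) (hϖ : v ϖ ≤ 1) (h : v p < v ϖ ^ (p - 1)) {i : ℕ} (hi : i ∈ Finset.Ico 1 p) :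
    v (p.choose i * ϖ ^ i / ϖ ^ p) < 1 := by
  obtain ⟨hi0, hip⟩ := Finset.mem_Ico.1 hi
  have hpos : 0 < v ϖ := v.pos_iff.2 hϖ0
  have hchoose : v (p.choose i : F) ≤ v p := by
    obtain ⟨d, hd⟩ := hp.dvd_choose_self (by omega) hip
    rw [hd, Nat.cast_mul, map_mul]
    exact mul_le_of_le_one_right' (v.map_natCast_le_one d)
  refine (mul_lt_mul_iff_left₀ (pow_pos hpos p)).1 ?_
  calc v (p.choose i * ϖ ^ i / ϖ ^ p) * v ϖ ^ p = v (p.choose i : F) * v ϖ ^ i := by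
        rw [← map_pow, ← map_mul, div_mul_cancel₀ _ (pow_ne_zero _ hϖ0), map_mul, map_pow]
    _ < v ϖ ^ (p - 1) * v ϖ ^ i :=
        mul_lt_mul_of_pos_right (hchoose.trans_lt h) (pow_pos hpos i)
    _ ≤ 1 * v ϖ ^ p := by
        rw [← pow_add, one_mul]; exact pow_le_pow_right_of_le_one' hϖ (by omega)

theorem residue_eq_zero_iff (v : Valuation F Γ₀) {x : v.valuationSubring} :
    residue v.valuationSubring x = 0 ↔ v x < 1 := by
  rw [IsLocalRing.residue_eq_zero_iff, Valuation.mem_maximalIdeal_iff]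

end Valuation

theorem one_add_mul_pow_sub_one_div_pow_eq {F : Type*} [Field F] {ϖ : F} (hϖ : ϖ ≠ 0) (t : F)
    {n : ℕ} (hn : n ≠ 0) :
    ((1 + ϖ * t) ^ n - 1) / ϖ ^ n =
      t ^ n + ∑ i ∈ Finset.Ico 1 n, n.choose i * ϖ ^ i / ϖ ^ n * t ^ i := by
  rw [div_eq_iff (pow_ne_zero n hϖ), add_mul, Finset.sum_mul, add_comm, add_pow,
    Finset.sum_range_succ, Finset.range_eq_Ico,
    Finset.sum_eq_sum_Ico_succ_bot (Nat.pos_of_ne_zero hn)]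
  have hterm : ∀ i ∈ Finset.Ico 1 n, n.choose i * ϖ ^ i / ϖ ^ n * t ^ i * ϖ ^ n
      = (ϖ * t) ^ i * 1 ^ (n - i) * n.choose i := fun i _ => by
    field_simp
    ring
  rw [Finset.sum_congr rfl hterm]
  simp only [pow_zero, tsub_zero, one_pow, mul_one, Nat.choose_zero_right, Nat.cast_one, zero_add,
    tsub_self, Nat.choose_self]
  ring

theorem val_le_one_and_pow_sub_lt_one_of_one_add_mul_pow_eq {Γ₀ : Type*}
    [LinearOrderedCommGroupWithZero Γ₀] (vK : Valuation K Γ₀) (vL : Valuation L Γ₀) {e : ℕ}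
    (he : e ≠ 0) (hcomp : ∀ x : K, vL (algebraMap K L x) = vK x ^ e) {p : ℕ} (hp : p.Prime)
    {π ϖ u c : K} (hϖ0 : ϖ ≠ 0) (hϖ : vK ϖ ≤ 1) (hπ : vK π < 1) (hpϖ : vK p < vK ϖ ^ (p - 1))
    (hu : vK u ≤ 1) (hc : vK c ≤ 1) {t : L}
    (ht : (1 + algebraMap K L ϖ * t) ^ p =
      algebraMap K L ((1 + ϖ ^ p * u) * (1 + ϖ ^ p * π * c))) :
    vL t ≤ 1 ∧ vL (t ^ p - algebraMap K L u) < 1 := by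
  set b := ((1 + ϖ ^ p * u) * (1 + ϖ ^ p * π * c) - 1) / ϖ ^ p
  have hϖu : vK (ϖ ^ p * u) ≤ 1 := by
    rw [map_mul, map_pow]; exact mul_le_one' (pow_le_one' hϖ p) hu
  have hbu : vK (b - u) < 1 := by
    have : b - u = π * c * (1 + ϖ ^ p * u) := by simp only [b]; field_simp; ring
    rw [this, map_mul, map_mul]
    exact mul_lt_one_of_lt_of_le (mul_lt_one_of_lt_of_le hπ hc)
      (vK.map_add_le vK.map_one.le hϖu)
  have hb : vK b ≤ 1 := by
    rw [← sub_add_cancel b u]; exact vK.map_add_le hbu.le hu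
  have heq : t ^ p + ∑ i ∈ Finset.Ico 1 p,
      algebraMap K L (p.choose i * ϖ ^ i / ϖ ^ p) * t ^ i = algebraMap K L b := by
    simp only [map_div₀, map_mul, map_pow, map_natCast]
    rw [← one_add_mul_pow_sub_one_div_pow_eq ((map_ne_zero _).2 hϖ0) t hp.ne_zero, ht]
    simp [b]
  obtain ⟨ht1, htb⟩ := vL.le_one_and_pow_sub_lt_one_of_pow_add_sum_eq hp.ne_zero
    (fun i hi => (Finset.mem_Ico.1 hi).2)
    (fun i hi => by
      rw [hcomp]
      exact pow_lt_one₀ zero_le (vK.choose_mul_pow_div_pow_lt_one hp hϖ0 hϖ hpϖ hi) he)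
    (by rw [hcomp]; exact pow_le_one' hb e) heq
  refine ⟨ht1, ?_⟩
  rw [← sub_add_sub_cancel _ (algebraMap K L b), ← map_sub]
  exact vL.map_add_lt htb (by rw [hcomp]; exact pow_lt_one₀ zero_le hbu he)

theorem eq_zero_of_sum_map_mul_pow_eq_zero {F E : Type*} [Field F] [Field E] (φ : F →+* E)
    {p : ℕ} (hp : p.Prime) {u : F} (hu : ¬∃ y, y ^ p = u) {β : E} (hβ : β ^ p = φ u)
    {g : Fin p → F} (hg : ∑ i, φ (g i) * β ^ (i : ℕ) = 0) (i : Fin p) : g i = 0 := by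
  let := φ.toAlgebra
  have hirr : Irreducible (Polynomial.X ^ p - Polynomial.C u) :=
    X_pow_sub_C_irreducible_of_prime hp fun y hy => hu ⟨y, hy⟩
  have hmin : minpoly F β = Polynomial.X ^ p - Polynomial.C u :=
    (minpoly.eq_of_irreducible_of_monic hirr (by simp [hβ, RingHom.algebraMap_toAlgebra])
      (Polynomial.monic_X_pow_sub_C u hp.ne_zero)).symm
  have hli := linearIndependent_pow (K := F) β
  rw [hmin, Polynomial.natDegree_X_pow_sub_C] at hli
  exact Fintype.linearIndependent_iff.1 hli g
    (by simpa [Algebra.smul_def, RingHom.algebraMap_toAlgebra] using hg) i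

theorem eq_one_of_surjective_of_forall_exists_eq_pow {R S : Type*} [Ring R] [Ring S]
    (vR : Valuation R ℤₘ₀) (vS : Valuation S ℤₘ₀) (hsurj : Function.Surjective vS) {e : ℕ}
    (h : ∀ y : S, ∃ x : R, vS y = vR x ^ e) : e = 1 := by
  obtain ⟨y, hy⟩ := hsurj (WithZero.exp (-1))
  obtain ⟨x, hx⟩ := h y
  rw [hy] at hx
  have hx0 : vR x ≠ 0 := by
    rintro h0
    rcases e with _ | e <;> simp [h0] at hx
  rw [← WithZero.exp_log hx0, ← WithZero.exp_nsmul, WithZero.exp_inj, nsmul_eq_mul] at hx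
  have := Int.eq_one_or_neg_one_of_mul_eq_neg_one hx.symm
  omega

theorem exists_eq_sum_algebraMap_mul_of_adjoin_eq_top {p : ℕ} (hp : p ≠ 0) {a : K} {α : L}
    (hα : α ^ p = algebraMap K L a) (hgen : IntermediateField.adjoin K {α} = ⊤)
    {ι : Type*} [Fintype ι] (hcard : Fintype.card ι = p) {b : ι → L}
    (hli : LinearIndependent K b) (y : L) : ∃ c : ι → K, y = ∑ i, algebraMap K L (c i) * b i := by
  have hroot : Polynomial.aeval α (Polynomial.X ^ p - Polynomial.C a) = 0 := by simp [hα]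
  have hint : IsIntegral K α := ⟨_, Polynomial.monic_X_pow_sub_C a hp, hroot⟩
  have : FiniteDimensional K L := by
    have := IntermediateField.adjoin.finiteDimensional hint
    rw [hgen] at this
    exact IntermediateField.topEquiv.toLinearEquiv.finiteDimensional
  have hfinrank : Module.finrank K L ≤ p := by
    rw [← IntermediateField.finrank_top', ← hgen, IntermediateField.adjoin.finrank hint]
    simpa using Polynomial.natDegree_le_of_dvd (minpoly.dvd K α hroot)
      (Polynomial.X_pow_sub_C_ne_zero (Nat.pos_of_ne_zero hp) a)
  have hspan := hli.span_eq_top_of_card_eq_finrank'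
    (hli.fintype_card_le_finrank.antisymm (hcard ▸ hfinrank))
  obtain ⟨c, hc⟩ :=
    (Submodule.mem_span_range_iff_exists_fun K).1 (hspan ▸ Submodule.mem_top (x := y))
  exact ⟨c, by simp [← hc, Algebra.smul_def]⟩

theorem WithZero.exp_neg_lt_exp_neg_one_pow {a b : ℕ} (h : a < b) :
    WithZero.exp (-(b : ℤ)) < WithZero.exp (-1 : ℤ) ^ a := by
  rw [← WithZero.exp_nsmul, WithZero.exp_lt_exp]
  simp only [smul_neg, nsmul_eq_mul, mul_one, neg_lt_neg_iff]
  exact_mod_cast h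

section ResidueExtension

variable (vK : Valuation K ℤₘ₀) (vL : Valuation L ℤₘ₀) (e : ℕ) (he : 0 < e)
  (hcomp : ∀ x : K, vL (algebraMap K L x) = vK x ^ e)
  {ι : Type*} [Fintype ι] (b : ι → vL.valuationSubring)

theorem ResHom_residue (x : vK.valuationSubring) :
    ResHom vK vL e he hcomp (residue vK.valuationSubring x) =
      residue vL.valuationSubring (VIntHom vK vL e hcomp x) :=
  haveI := VIntHom_isLocalHom vK vL e he hcomp
  IsLocalRing.ResidueField.map_residue _ x

theorem residue_eq_ResHom_residue_iff (y : vL.valuationSubring) (x : vK.valuationSubring) :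
    residue vL.valuationSubring y = ResHom vK vL e he hcomp (residue vK.valuationSubring x) ↔
      vL (y - algebraMap K L x) < 1 := by
  rw [ResHom_residue, ← sub_eq_zero, ← map_sub, vL.residue_eq_zero_iff]
  rfl

theorem coe_sum_VIntHom_mul (g : ι → vK.valuationSubring) :
    ((∑ i, VIntHom vK vL e hcomp (g i) * b i : vL.valuationSubring) : L) =
      ∑ i, algebraMap K L (g i) * b i := by
  change vL.valuationSubring.subtype _ = _
  simp only [map_sum, map_mul]
  rfl

variable {vK vL e he hcomp b}
  -- the residues of `b` are linearly independent over the residue field of `K`, acting via `ResHom`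
  (hind : ∀ g : ι → ResidueField vK.valuationSubring,
    ∑ i, ResHom vK vL e he hcomp (g i) * residue vL.valuationSubring (b i) = 0 → ∀ i, g i = 0)
include hind

theorem val_sum_algebraMap_mul_eq_one {g : ι → vK.valuationSubring} (hg : ∃ i, vK (g i) = 1) :
    vL (∑ i, algebraMap K L (g i) * b i) = 1 := by
  obtain ⟨i, hi⟩ := hg
  rw [← coe_sum_VIntHom_mul]
  refine le_antisymm (∑ i, VIntHom vK vL e hcomp (g i) * b i).2 (not_lt.1 fun hlt => ?_)
  rw [← vL.residue_eq_zero_iff, map_sum] at hlt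
  have := hind (fun j => residue vK.valuationSubring (g j))
    (by simpa only [ResHom_residue, map_mul] using hlt) i
  exact (vK.residue_eq_zero_iff.1 this).ne hi

theorem exists_val_sum_algebraMap_mul_eq [Nonempty ι] (c : ι → K) :
    ∃ i, (∀ j, vK (c j) ≤ vK (c i)) ∧ vL (∑ j, algebraMap K L (c j) * b j) = vK (c i) ^ e := by
  obtain ⟨i, -, hmax⟩ :=
    Finset.exists_max_image Finset.univ (fun j => vK (c j)) Finset.univ_nonempty
  refine ⟨i, fun j => hmax j (Finset.mem_univ j), ?_⟩
  by_cases hci : c i = 0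
  · have hc : ∀ j, c j = 0 := fun j => by simpa [hci] using hmax j (Finset.mem_univ j)
    simp [hc, he.ne']
  · have hle : ∀ j, vK (c j / c i) ≤ 1 := fun j => by
      rw [map_div₀, div_le_one₀ (vK.pos_iff.2 hci)]; exact hmax j (Finset.mem_univ j)
    have hone := val_sum_algebraMap_mul_eq_one hind (g := fun j => ⟨c j / c i, hle j⟩)
      ⟨i, by simp [div_self hci]⟩
    have hsum : ∑ j, algebraMap K L (c j / c i) * b j =
        (algebraMap K L (c i))⁻¹ * ∑ j, algebraMap K L (c j) * b j := by
      rw [Finset.mul_sum]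
      exact Finset.sum_congr rfl fun j _ => by rw [map_div₀]; ring
    rw [hsum, map_mul, map_inv₀, hcomp, inv_mul_eq_one₀ (pow_ne_zero _ (vK.ne_zero_iff.2 hci))]
      at hone
    exact hone.symm

theorem linearIndependent_coe_of_residue : LinearIndependent K (fun i => (b i : L)) := by
  refine Fintype.linearIndependent_iff.2 fun c hc j => ?_
  have : Nonempty ι := ⟨j⟩
  obtain ⟨i, hmax, hval⟩ := exists_val_sum_algebraMap_mul_eq hind c
  simp only [← Algebra.smul_def, hc, map_zero] at hval
  have hci : vK (c i) = 0 := (pow_eq_zero_iff he.ne').1 hval.symm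
  exact vK.zero_iff.1 (le_zero_iff.1 (hci ▸ hmax j))

theorem exists_val_eq_pow_of_forall_exists_eq_sum [Nonempty ι]
    (hspan : ∀ y : L, ∃ c : ι → K, y = ∑ i, algebraMap K L (c i) * b i) (y : L) :
    ∃ x : K, vL y = vK x ^ e := by
  obtain ⟨c, rfl⟩ := hspan y
  obtain ⟨i, -, hi⟩ := exists_val_sum_algebraMap_mul_eq hind c
  exact ⟨c i, hi⟩

theorem eq_top_of_range_ResHom_subset_of_residue_mem [Nonempty ι]
    (hspan : ∀ y : L, ∃ c : ι → K, y = ∑ i, algebraMap K L (c i) * b i)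
    (S : Subfield (ResidueField vL.valuationSubring))
    (hφS : Set.range (ResHom vK vL e he hcomp) ⊆ S)
    (hbS : ∀ i, residue vL.valuationSubring (b i) ∈ S) :
    S = ⊤ := by
  refine eq_top_iff.2 fun x _ => ?_
  obtain ⟨w, rfl⟩ := IsLocalRing.residue_surjective x
  obtain ⟨c, hc⟩ := hspan w
  obtain ⟨i, hmax, hval⟩ := exists_val_sum_algebraMap_mul_eq hind c
  have hci : vK (c i) ≤ 1 := by
    rw [← pow_le_one_iff he.ne', ← hval, ← hc]; exact w.2
  have hw : w = ∑ j, VIntHom vK vL e hcomp ⟨c j, (hmax j).trans hci⟩ * b j :=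
    Subtype.ext (by rw [coe_sum_VIntHom_mul]; exact hc)
  rw [hw, map_sum]
  refine S.sum_mem fun j _ => ?_
  rw [map_mul, ← ResHom_residue vK vL e he hcomp]
  exact S.mul_mem (hφS ⟨_, rfl⟩) (hbS j)

end ResidueExtension

theorem kummer_ferocious_principal_unit_general
    (p : ℕ) (hp : p.Prime)
    (K : Type*) [Field K] (vK : Valuation K ℤₘ₀)
    (L : Type*) [Field L] [Algebra K L] (vL : Valuation L ℤₘ₀)
    (hsurjL : Function.Surjective vL)
    (e : ℕ) (he : 0 < e) (hcomp : ∀ x : K, vL (algebraMap K L x) = vK x ^ e)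
    (π : K) (hπ : vK π = ((ofAdd (-1 : ℤ) : Multiplicative ℤ) : ℤₘ₀))
    (eK : ℕ) (heK : vK (p : K) = ((ofAdd (-(eK : ℤ)) : Multiplicative ℤ) : ℤₘ₀))
    (m : ℕ) (hbound : m * p * (p - 1) < eK * p)
    (u : vK.valuationSubring)
    (hu : ¬ ∃ y : ResidueField vK.valuationSubring,
      y ^ p = residue vK.valuationSubring u)
    (a : K)
    (ha : ∃ c : K, vK c ≤ 1 ∧
      a = (1 + π ^ (m * p) * (u : K)) * (1 + π ^ (m * p + 1) * c))
    (α : L) (hα : α ^ p = algebraMap K L a)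
    (hgen : IntermediateField.adjoin K {α} = ⊤) :
    (∃ β : ResidueField vL.valuationSubring,
        β ^ p = ResHom vK vL e he hcomp (residue vK.valuationSubring u) ∧
        Subfield.closure (Set.range (ResHom vK vL e he hcomp) ∪ {β}) = ⊤) ∧
      e = 1 := by
  obtain ⟨c, hc, rfl⟩ := ha
  have hπ0 : π ≠ 0 := vK.ne_zero_iff.1 (hπ ▸ WithZero.exp_ne_zero)
  have hπ1 : vK π < 1 := hπ ▸ WithZero.exp_lt_exp.2 (by omega)
  have hpπ : vK p < vK (π ^ m) ^ (p - 1) := by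
    rw [← map_pow, ← pow_mul, map_pow, hπ, heK]
    exact WithZero.exp_neg_lt_exp_neg_one_pow
      (Nat.lt_of_mul_lt_mul_right (by rwa [mul_right_comm] at hbound))
  set t := (α - 1) / algebraMap K L (π ^ m)
  have hαt : (1 + algebraMap K L (π ^ m) * t) ^ p =
      algebraMap K L ((1 + (π ^ m) ^ p * u) * (1 + (π ^ m) ^ p * π * c)) := by
    rw [mul_div_cancel₀ _ ((map_ne_zero _).2 (pow_ne_zero m hπ0)), add_sub_cancel, hα, ← pow_mul,
      pow_succ]
  obtain ⟨ht1, htu⟩ := val_le_one_and_pow_sub_lt_one_of_one_add_mul_pow_eq vK vL he.ne' hcomp hp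
    (pow_ne_zero m hπ0) (by rw [map_pow]; exact pow_le_one' hπ1.le m) hπ1 hpπ u.2 hc hαt
  set β := residue vL.valuationSubring ⟨t, ht1⟩
  have hβ : β ^ p = ResHom vK vL e he hcomp (residue vK.valuationSubring u) := by
    rw [← map_pow, residue_eq_ResHom_residue_iff]; exact htu
  have hind : ∀ g : Fin p → ResidueField vK.valuationSubring,
      ∑ i, ResHom vK vL e he hcomp (g i) * residue vL.valuationSubring (⟨t, ht1⟩ ^ (i : ℕ)) = 0 →
        ∀ i, g i = 0 := fun g hg =>
    eq_zero_of_sum_map_mul_pow_eq_zero _ hp hu hβ (by simpa only [map_pow] using hg)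
  have hspan := exists_eq_sum_algebraMap_mul_of_adjoin_eq_top hp.ne_zero hα hgen
    (Fintype.card_fin p) (linearIndependent_coe_of_residue hind)
  have : Nonempty (Fin p) := ⟨⟨0, hp.pos⟩⟩
  refine ⟨⟨β, hβ, ?_⟩, ?_⟩
  · refine eq_top_of_range_ResHom_subset_of_residue_mem hind hspan _
      (fun x hx => Subfield.subset_closure (Or.inl hx)) fun i => ?_
    rw [map_pow]
    exact pow_mem (Subfield.subset_closure (Or.inr rfl) : β ∈ Subfield.closure _) _
  · exact eq_one_of_surjective_of_forall_exists_eq_pow vK vL hsurjL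
      (exists_val_eq_pow_of_forall_exists_eq_sum hind hspan)

/-- Lemma 2.4 (5): Let `K` be a complete discrete valuation field of mixed characteristic
`(0, p)` containing a primitive `p`-th root of unity, with prime element `π` and
`e_K = ord_K p`, and let `L = K(α)` be the Kummer extension given by `α ^ p = a` with
`a ∈ (1 + π^{mp} u)(1 + π^{n+1} 𝒪_K)`, where `1 ≤ n = mp < e_K p/(p-1)` and `u ∈ 𝒪_K`
has residue class `ū ∉ F^p`.  Then the residue field of `L` equals `F(ū^{1/p})` and
`e(L/K) = 1`. -/
theorem kummer_ferocious_principal_unit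
    (p : ℕ) (hp : p.Prime)
    (K : Type*) [Field K] [CharZero K] (vK : Valuation K ℤₘ₀)
    (hsurjK : Function.Surjective vK)
    (hcompl : IsAdicComplete (maximalIdeal vK.valuationSubring) vK.valuationSubring)
    (hres : CharP (ResidueField vK.valuationSubring) p)
    (ζ : K) (hζ : IsPrimitiveRoot ζ p)
    (L : Type*) [Field L] [Algebra K L] (vL : Valuation L ℤₘ₀)
    (hsurjL : Function.Surjective vL)
    (e : ℕ) (he : 0 < e) (hcomp : ∀ x : K, vL (algebraMap K L x) = vK x ^ e)
    (π : K) (hπ : vK π = ((ofAdd (-1 : ℤ) : Multiplicative ℤ) : ℤₘ₀))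
    (eK : ℕ) (heK : vK (p : K) = ((ofAdd (-(eK : ℤ)) : Multiplicative ℤ) : ℤₘ₀))
    (m : ℕ) (hm : 1 ≤ m) (hbound : m * p * (p - 1) < eK * p)
    (u : vK.valuationSubring)
    (hu : ¬ ∃ y : ResidueField vK.valuationSubring,
      y ^ p = residue vK.valuationSubring u)
    (a : K)
    (ha : ∃ c : K, vK c ≤ 1 ∧
      a = (1 + π ^ (m * p) * (u : K)) * (1 + π ^ (m * p + 1) * c))
    (α : L) (hα : α ^ p = algebraMap K L a)
    (hgen : IntermediateField.adjoin K {α} = ⊤) :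
    (∃ β : ResidueField vL.valuationSubring,
        β ^ p = ResHom vK vL e he hcomp (residue vK.valuationSubring u) ∧
        Subfield.closure (Set.range (ResHom vK vL e he hcomp) ∪ {β}) = ⊤) ∧
      e = 1 :=
  kummer_ferocious_principal_unit_general p hp K vK L vL hsurjL e he hcomp π hπ eK heK m hbound u hu
    a ha α hα hgen
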